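/- For all smooth functions u, v : ℝ² → ℝ, define C := ∂₁∂₂u − u − ∂₂∂₂v, A := ∂₁∂₁∂₂∂₂u − ∂₁∂₂∂₂∂₂v − ∂₂∂₂v − u, and B := ∂₁∂₁∂₁∂₂u − ∂₁∂₁u − ∂₁∂₁∂₂∂₂v. Then the three identities A = ∂₁∂₂C + C, B = ∂₁∂₁C, and C = ∂₂∂₂B − ∂₁∂₂A + A hold on ℝ². In particular, the fourth-order compatibility conditions A and B of the system ∂₂∂₂y = u, ∂₁∂₂y − y = v are generated by the single second-order compatibility condition C, and conversely. -/

import Mathlib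

/-- Partial derivative with respect to the `i`-th coordinate of `ℝⁿ`. -/
noncomputable def pd {n : ℕ} (i : Fin n) (f : (Fin n → ℝ) → ℝ) : (Fin n → ℝ) → ℝ :=
  fun x => fderiv ℝ f x (Pi.single i 1)

lemma pd_smooth {n : ℕ} {f : (Fin n → ℝ) → ℝ} (hf : ContDiff ℝ (⊤ : ℕ∞) f) (i : Fin n) :
    ContDiff ℝ (⊤ : ℕ∞) (pd i f) := by
  have h := hf.fderiv_right (m := (⊤ : ℕ∞)) (by simp)
  exact (ContinuousLinearMap.apply ℝ ℝ (Pi.single i 1)).contDiff.comp h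

lemma cdiff {n : ℕ} {f : (Fin n → ℝ) → ℝ} (hf : ContDiff ℝ (⊤ : ℕ∞) f) :
    Differentiable ℝ f := hf.differentiable (by simp)

lemma pd_comm {n : ℕ} {f : (Fin n → ℝ) → ℝ} (hf : ContDiff ℝ (⊤ : ℕ∞) f) (i j : Fin n) :
    pd i (pd j f) = pd j (pd i f) := by
  funext x
  have hdf : Differentiable ℝ f := cdiff hf
  have hdf' : Differentiable ℝ (fderiv ℝ f) :=
    (hf.fderiv_right (m := (⊤ : ℕ∞)) (by simp)).differentiable (by simp)
  have hpd : ∀ (k l : Fin n) (y : (Fin n → ℝ)),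
      pd k (pd l f) y = fderiv ℝ (fderiv ℝ f) y (Pi.single k 1) (Pi.single l 1) := by
    intro k l y
    show fderiv ℝ (fun z => fderiv ℝ f z (Pi.single l 1)) y (Pi.single k 1) = _
    rw [fderiv_clm_apply (hdf' y) (differentiableAt_const _)]
    simp
  rw [hpd, hpd]
  exact second_derivative_symmetric (fun y => (hdf y).hasFDerivAt) ((hdf' x).hasFDerivAt) _ _

lemma pd_sub3 {n : ℕ} {f g h : (Fin n → ℝ) → ℝ} (hf : Differentiable ℝ f)
    (hg : Differentiable ℝ g) (hh : Differentiable ℝ h) (i : Fin n) :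
    pd i (fun x => f x - g x - h x) = fun x => pd i f x - pd i g x - pd i h x := by
  funext x
  show fderiv ℝ (fun x => f x - g x - h x) x (Pi.single i 1) = _
  rw [fderiv_fun_sub ((hf x).fun_sub (hg x)) (hh x), fderiv_fun_sub (hf x) (hg x)]
  simp [pd]

lemma pd_sub4 {n : ℕ} {f g h k : (Fin n → ℝ) → ℝ} (hf : Differentiable ℝ f)
    (hg : Differentiable ℝ g) (hh : Differentiable ℝ h) (hk : Differentiable ℝ k) (i : Fin n) :
    pd i (fun x => f x - g x - h x - k x)
      = fun x => pd i f x - pd i g x - pd i h x - pd i k x := by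
  funext x
  show fderiv ℝ (fun x => f x - g x - h x - k x) x (Pi.single i 1) = _
  rw [fderiv_fun_sub (((hf x).fun_sub (hg x)).fun_sub (hh x)) (hk x),
    fderiv_fun_sub ((hf x).fun_sub (hg x)) (hh x), fderiv_fun_sub (hf x) (hg x)]
  simp [pd]


/- Coordinates on `ℝ²` are `x 0, x 1`, so `∂₁ = pd 0` and `∂₂ = pd 1`. -/

/-- `C := ∂₁∂₂u − u − ∂₂∂₂v`, the second-order compatibility condition of the
system `∂₂∂₂y = u`, `∂₁∂₂y − y = v`. -/
noncomputable def Csys (u v : (Fin 2 → ℝ) → ℝ) : (Fin 2 → ℝ) → ℝ :=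
  fun x => pd 0 (pd 1 u) x - u x - pd 1 (pd 1 v) x

/-- `A := ∂₁∂₁∂₂∂₂u − ∂₁∂₂∂₂∂₂v − ∂₂∂₂v − u`. -/
noncomputable def Asys (u v : (Fin 2 → ℝ) → ℝ) : (Fin 2 → ℝ) → ℝ :=
  fun x => pd 0 (pd 0 (pd 1 (pd 1 u))) x - pd 0 (pd 1 (pd 1 (pd 1 v))) x
    - pd 1 (pd 1 v) x - u x

/-- `B := ∂₁∂₁∂₁∂₂u − ∂₁∂₁u − ∂₁∂₁∂₂∂₂v`. -/
noncomputable def Bsys (u v : (Fin 2 → ℝ) → ℝ) : (Fin 2 → ℝ) → ℝ :=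
  fun x => pd 0 (pd 0 (pd 0 (pd 1 u))) x - pd 0 (pd 0 u) x
    - pd 0 (pd 0 (pd 1 (pd 1 v))) x

/-- The identities `A = ∂₁∂₂C + C`, `B = ∂₁∂₁C` and `C = ∂₂∂₂B − ∂₁∂₂A + A`:
the fourth-order compatibility conditions `A, B` are generated by the single
second-order compatibility condition `C`, and conversely. -/
theorem A_B_generated_by_C (u v : (Fin 2 → ℝ) → ℝ)
    (hu : ContDiff ℝ (⊤ : ℕ∞) u) (hv : ContDiff ℝ (⊤ : ℕ∞) v) :
    (∀ x, Asys u v x = pd 0 (pd 1 (Csys u v)) x + Csys u v x) ∧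
    (∀ x, Bsys u v x = pd 0 (pd 0 (Csys u v)) x) ∧
    (∀ x, Csys u v x = pd 1 (pd 1 (Bsys u v)) x - pd 0 (pd 1 (Asys u v)) x + Asys u v x) := by
  -- smoothness of iterated partial derivatives (name = list of indices, outermost first)
  have hu0 := pd_smooth hu 0
  have hu1 := pd_smooth hu 1
  have hu01 := pd_smooth hu1 0
  have hu11 := pd_smooth hu1 1
  have hu001 := pd_smooth hu01 0
  have hu011 := pd_smooth hu11 0
  have hu0011 := pd_smooth hu011 0
  have hv1 := pd_smooth hv 1
  have hv11 := pd_smooth hv1 1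
  have hv011 := pd_smooth hv11 0
  have hv111 := pd_smooth hv11 1
  have hu111 := pd_smooth hu11 1
  have hv0111 := pd_smooth hv111 0
  -- ∂₂ C, normalized
  have e1 : pd 1 (Csys u v)
      = fun x => pd 0 (pd 1 (pd 1 u)) x - pd 1 u x - pd 1 (pd 1 (pd 1 v)) x := by
    unfold Csys
    rw [pd_sub3 (cdiff hu01) (cdiff hu) (cdiff hv11) 1, pd_comm hu1 1 0]
  -- ∂₁ ∂₂ C
  have e2 : pd 0 (pd 1 (Csys u v))
      = fun x => pd 0 (pd 0 (pd 1 (pd 1 u))) x - pd 0 (pd 1 u) x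
          - pd 0 (pd 1 (pd 1 (pd 1 v))) x := by
    rw [e1, pd_sub3 (cdiff hu011) (cdiff hu1) (cdiff hv111) 0]
  -- ∂₁ C
  have f1 : pd 0 (Csys u v)
      = fun x => pd 0 (pd 0 (pd 1 u)) x - pd 0 u x - pd 0 (pd 1 (pd 1 v)) x := by
    unfold Csys
    rw [pd_sub3 (cdiff hu01) (cdiff hu) (cdiff hv11) 0]
  -- ∂₁ ∂₁ C
  have f2 : pd 0 (pd 0 (Csys u v))
      = fun x => pd 0 (pd 0 (pd 0 (pd 1 u))) x - pd 0 (pd 0 u) x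
          - pd 0 (pd 0 (pd 1 (pd 1 v))) x := by
    rw [f1, pd_sub3 (cdiff hu001) (cdiff hu0) (cdiff hv011) 0]
  -- ∂₂ B, normalized
  have g1 : pd 1 (Bsys u v)
      = fun x => pd 0 (pd 0 (pd 0 (pd 1 (pd 1 u)))) x - pd 0 (pd 0 (pd 1 u)) x
          - pd 0 (pd 0 (pd 1 (pd 1 (pd 1 v)))) x := by
    unfold Bsys
    rw [pd_sub3 (cdiff (pd_smooth hu001 0)) (cdiff (pd_smooth hu0 0))
        (cdiff (pd_smooth hv011 0)) 1,
      pd_comm hu001 1 0, pd_comm hu01 1 0, pd_comm hu1 1 0,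
      pd_comm hu0 1 0, pd_comm hu 1 0,
      pd_comm hv011 1 0, pd_comm hv11 1 0]
  -- ∂₂ ∂₂ B, normalized
  have g2 : pd 1 (pd 1 (Bsys u v))
      = fun x => pd 0 (pd 0 (pd 0 (pd 1 (pd 1 (pd 1 u))))) x
          - pd 0 (pd 0 (pd 1 (pd 1 u))) x
          - pd 0 (pd 0 (pd 1 (pd 1 (pd 1 (pd 1 v))))) x := by
    rw [g1, pd_sub3 (cdiff (pd_smooth (pd_smooth hu011 0) 0)) (cdiff hu001)
        (cdiff (pd_smooth (pd_smooth hv111 0) 0)) 1,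
      pd_comm (pd_smooth hu011 0) 1 0, pd_comm hu011 1 0, pd_comm hu11 1 0,
      pd_comm hu01 1 0, pd_comm hu1 1 0,
      pd_comm (pd_smooth hv111 0) 1 0, pd_comm hv111 1 0]
  -- ∂₂ A, normalized
  have g3 : pd 1 (Asys u v)
      = fun x => pd 0 (pd 0 (pd 1 (pd 1 (pd 1 u)))) x
          - pd 0 (pd 1 (pd 1 (pd 1 (pd 1 v)))) x
          - pd 1 (pd 1 (pd 1 v)) x - pd 1 u x := by
    unfold Asys
    rw [pd_sub4 (cdiff hu0011) (cdiff hv0111) (cdiff hv11) (cdiff hu) 1,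
      pd_comm hu011 1 0, pd_comm hu11 1 0,
      pd_comm hv111 1 0]
  -- ∂₁ ∂₂ A
  have g4 : pd 0 (pd 1 (Asys u v))
      = fun x => pd 0 (pd 0 (pd 0 (pd 1 (pd 1 (pd 1 u))))) x
          - pd 0 (pd 0 (pd 1 (pd 1 (pd 1 (pd 1 v))))) x
          - pd 0 (pd 1 (pd 1 (pd 1 v))) x - pd 0 (pd 1 u) x := by
    rw [g3, pd_sub4 (cdiff (pd_smooth (pd_smooth hu111 0) 0)) (cdiff (pd_smooth (pd_smooth hv111 1) 0)) (cdiff hv111) (cdiff hu1) 0]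
  refine ⟨?_, ?_, ?_⟩
  · intro x; simp only [Asys, Csys, e2]; ring
  · intro x; simp only [Bsys, f2]
  · intro x; simp only [Asys, Csys, g2, g4]; ring
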